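/- Let s ≠ t be reflections in GL_n(ℚ) that generate a finite subgroup R = ⟨s, t⟩. Then, as a ℚ-vector space, ℚ[x_1,…,x_n] is the internal direct sum ℚ[x_1,…,x_n] = ℚ[x_1,…,x_n]^R_det ⊕ (ℚ[x_1,…,x_n]^s + ℚ[x_1,…,x_n]^t); equivalently, these two (graded) subspaces intersect trivially and their sum contains every polynomial, in each homogeneous degree. -/

import Mathlib

open Matrix MvPolynomial

/-- The action of an `n × n` rational matrix on `ℚ[x_1, …, x_n]` by linear substitution
of the variables: `x_i ↦ ∑ j, g j i • x_j`. -/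
noncomputable def matAct {n : ℕ} (g : Matrix (Fin n) (Fin n) ℚ) :
    MvPolynomial (Fin n) ℚ →ₐ[ℚ] MvPolynomial (Fin n) ℚ :=
  MvPolynomial.aeval fun i => ∑ j, MvPolynomial.C (g j i) * MvPolynomial.X j

/-- The fixed subspace of `g ∈ GL_n(ℚ)` acting on `ℚ^n`; for a reflection this is its
reflecting hyperplane. -/
noncomputable def fixedSpace {n : ℕ} (g : GL (Fin n) ℚ) : Submodule ℚ (Fin n → ℚ) :=
  LinearMap.ker (Matrix.toLin' (g : Matrix (Fin n) (Fin n) ℚ) - LinearMap.id)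

/-- A reflection is an involution in `GL_n(ℚ)` whose fixed subspace has dimension `n - 1`. -/
def IsReflection {n : ℕ} (r : GL (Fin n) ℚ) : Prop :=
  r * r = 1 ∧ Module.finrank ℚ (fixedSpace r) = n - 1

/-- The subspace `ℚ[x_1, …, x_n]^H` of polynomials invariant under a subgroup
`H ≤ GL_n(ℚ)`. -/
noncomputable def polyInvariants {n : ℕ} (H : Subgroup (GL (Fin n) ℚ)) :
    Submodule ℚ (MvPolynomial (Fin n) ℚ) where
  carrier := {f | ∀ g ∈ H, matAct ((g : GL (Fin n) ℚ) : Matrix (Fin n) (Fin n) ℚ) f = f}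
  add_mem' := by
    intro a b ha hb g hg
    rw [map_add, ha g hg, hb g hg]
  zero_mem' := by
    intro g hg
    rw [map_zero]
  smul_mem' := by
    intro c f hf g hg
    rw [_root_.map_smul, hf g hg]

/-- The relative invariants `ℚ[x_1, …, x_n]^H_det` (with respect to the determinant) of a
subgroup `H ≤ GL_n(ℚ)`: the polynomials `f` with `g • f = det g • f` for all `g ∈ H`. -/
noncomputable def polyRelInvariants {n : ℕ} (H : Subgroup (GL (Fin n) ℚ)) :
    Submodule ℚ (MvPolynomial (Fin n) ℚ) where
  carrier := {f | ∀ g ∈ H,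
    matAct ((g : GL (Fin n) ℚ) : Matrix (Fin n) (Fin n) ℚ) f
      = ((g : GL (Fin n) ℚ) : Matrix (Fin n) (Fin n) ℚ).det • f}
  add_mem' := by
    intro a b ha hb g hg
    rw [map_add, ha g hg, hb g hg, smul_add]
  zero_mem' := by
    intro g hg
    rw [map_zero, smul_zero]
  smul_mem' := by
    intro c f hf g hg
    rw [_root_.map_smul, hf g hg, smul_comm]

/-- The subspace `ℚ[x_1, …, x_n]^g` of polynomials fixed by a single element
`g ∈ GL_n(ℚ)`. -/
noncomputable def polyInvariantsElem {n : ℕ} (g : GL (Fin n) ℚ) :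
    Submodule ℚ (MvPolynomial (Fin n) ℚ) where
  carrier := {f | matAct ((g : GL (Fin n) ℚ) : Matrix (Fin n) (Fin n) ℚ) f = f}
  add_mem' := by
    intro a b ha hb
    rw [Set.mem_setOf_eq, map_add, ha, hb]
  zero_mem' := by
    rw [Set.mem_setOf_eq, map_zero]
  smul_mem' := by
    intro c f hf
    rw [Set.mem_setOf_eq, _root_.map_smul, hf]

/-!
For a finite group `R` and the character `det`, the twisted average
`e = |R|⁻¹ ∑ g, det(g)⁻¹ • g` is a projection onto the relative invariants, so the polynomial
ring splits as `ℚ[x]^R_det ⊕ ker e`. A reflection has determinant `-1`, hence `e` kills every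
polynomial fixed by `s` or by `t`. Conversely, since `s` and `t` are involutions, writing
`g ∈ R` as a word in `s, t` telescopes `f - det(g)⁻¹ • g • f` into a sum of terms `u + r • u`
with `r ∈ {s, t}`, each fixed by `r`; as `f - e f` is the average of these differences,
`ker e ⊆ ℚ[x]^s + ℚ[x]^t`.
-/

open Module

namespace LinearMap

theorem det_eq_neg_one_pow_of_mul_self_eq_one {K V : Type*} [Field K]
    [NeZero (2 : K)] [AddCommGroup V] [Module K V] [FiniteDimensional K V]
    {f : V →ₗ[K] V} (hf : f * f = 1) :
    f.det = (-1) ^ (finrank K V - finrank K (ker (f - 1))) := by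
  have hff (x : V) : f (f x) = x := congr($hf x)
  have hpos (x : ker (f - 1)) : f x = x := sub_eq_zero.1 (mem_ker.1 x.2)
  set P : V →ₗ[K] V := (2⁻¹ : K) • (1 + f)
  have hP : IsProj (ker (f - 1)) P := by
    refine ⟨fun x => ?_, fun x hx => ?_⟩
    · simp [P, hff, add_comm]
    · rw [smul_apply, add_apply, hpos ⟨x, hx⟩, Module.End.one_apply, ← two_smul K, smul_smul,
        inv_mul_cancel₀ two_ne_zero, one_smul]
  have hneg (y : ker P) : f y = -y := by
    have hy : (2⁻¹ : K) • ((y : V) + f y) = 0 := y.2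
    rw [smul_eq_zero_iff_right (inv_ne_zero two_ne_zero)] at hy
    exact eq_neg_of_add_eq_zero_right hy
  let e := Submodule.prodEquivOfIsCompl _ _ hP.isCompl
  have hconj : e.symm.toLinearMap ∘ₗ f ∘ₗ e.toLinearMap = prodMap id (-id) := by
    refine LinearMap.ext fun ⟨x, y⟩ => e.symm_apply_eq.2 ?_
    simp [e, hpos, hneg]
  have hdim := Submodule.finrank_add_eq_of_isCompl hP.isCompl
  rw [← LinearMap.det_conj f e.symm, LinearEquiv.symm_symm, hconj, det_prodMap, det_id,
    ← neg_one_smul K id, det_smul, det_id, mul_one, one_mul]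
  congr 1
  omega

end LinearMap

namespace Representation

variable {k G V : Type*} [CommRing k] [Group G] [AddCommGroup V] [Module k V]

section Average

variable [Fintype G] [Invertible (Fintype.card G : k)] (σ : Representation k G V)

theorem averageMap_apply (v : V) : averageMap σ v = ⅟(Fintype.card G : k) • ∑ g, σ g v := by
  simp [GroupAlgebra.average, map_sum]

theorem averageMap_apply_self (g : G) (v : V) : averageMap σ (σ g v) = averageMap σ v := by
  rw [averageMap, ← asAlgebraHom_single_one, ← Module.End.mul_apply, ← map_mul,
    GroupAlgebra.mul_average_right]

theorem sub_averageMap_mem {W : Submodule k V} (hW : ∀ g v, v - σ g v ∈ W) (v : V) :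
    v - averageMap σ v ∈ W := by
  have : v - averageMap σ v = ⅟(Fintype.card G : k) • ∑ g, (v - σ g v) := by
    rw [averageMap_apply, Finset.sum_sub_distrib, smul_sub, Finset.sum_const, Finset.card_univ,
      ← Nat.cast_smul_eq_nsmul k, smul_smul, invOf_mul_self, one_smul]
  rw [this]
  exact W.smul_mem _ (W.sum_mem fun g _ => hW g v)

end Average

variable (ρ : Representation k G V) (χ : G →* kˣ)

def twist : Representation k G V where
  toFun g := (χ g)⁻¹ • ρ g
  map_one' := by simp
  map_mul' g h := by
    rw [map_mul, map_mul, _root_.mul_inv_rev, mul_comm (χ h)⁻¹, smul_mul_smul_comm]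

@[simp]
theorem twist_apply (g : G) (v : V) : twist ρ χ g v = (χ g)⁻¹ • ρ g v := rfl

theorem mem_invariants_twist (v : V) :
    v ∈ invariants (twist ρ χ) ↔ ∀ g, ρ g v = (χ g : k) • v := by
  simp only [mem_invariants, twist_apply, inv_smul_eq_iff]
  rfl

theorem sub_twist_apply_mem_ker {s : G} (hs : s * s = 1) (hχ : χ s = -1) (v : V) :
    v - twist ρ χ s v ∈ LinearMap.ker (ρ s - 1) := by
  have hss : ρ s (ρ s v) = v := by rw [← Module.End.mul_apply, ← map_mul, hs, map_one]; rfl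
  simp [hχ, hss, add_comm]

variable {ρ χ} {S : Set G}

theorem sub_twist_apply_mem_iSup_ker (hS : Subgroup.closure S = ⊤)
    (hSinv : ∀ s ∈ S, s * s = 1) (hSχ : ∀ s ∈ S, χ s = -1) (g : G) (v : V) :
    v - twist ρ χ g v ∈ ⨆ s ∈ S, LinearMap.ker (ρ s - 1) := by
  set W := ⨆ s ∈ S, LinearMap.ker (ρ s - 1)
  have step : ∀ s ∈ S, ∀ h, v - twist ρ χ h v ∈ W → v - twist ρ χ (s * h) v ∈ W := by
    intro s hs h ih
    rw [map_mul, Module.End.mul_apply, ← sub_add_sub_cancel v (twist ρ χ h v)]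
    exact add_mem ih (le_iSup₂ (f := fun s _ => LinearMap.ker (ρ s - 1)) s hs
      (sub_twist_apply_mem_ker ρ χ (hSinv s hs) (hSχ s hs) _))
  induction (hS ▸ Subgroup.mem_top g : g ∈ Subgroup.closure S)
    using Subgroup.closure_induction_left with
  | one => simp
  | mul_left s hs h _ ih => exact step s hs h ih
  | inv_mul_cancel s hs h _ ih =>
    rw [inv_eq_of_mul_eq_one_right (hSinv s hs)]
    exact step s hs h ih

variable [Fintype G] [Invertible (Fintype.card G : k)] [Invertible (2 : k)]

theorem averageMap_twist_eq_zero {s : G} (hχ : χ s = -1) {v : V}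
    (hv : v ∈ LinearMap.ker (ρ s - 1)) : averageMap (twist ρ χ) v = 0 := by
  have hsv : twist ρ χ s v = -v := by
    rw [LinearMap.mem_ker, LinearMap.sub_apply, sub_eq_zero] at hv
    simp [hχ, hv]
  have ha : averageMap (twist ρ χ) v + averageMap (twist ρ χ) v = 0 := by
    conv_lhs => arg 2; rw [← averageMap_apply_self (twist ρ χ) s v, hsv, map_neg]
    exact add_neg_cancel _
  rw [← one_smul k (averageMap _ v), ← invOf_mul_self (2 : k), mul_smul, two_smul, ha,
    smul_zero]

theorem ker_averageMap_twist (hS : Subgroup.closure S = ⊤) (hSinv : ∀ s ∈ S, s * s = 1)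
    (hSχ : ∀ s ∈ S, χ s = -1) :
    LinearMap.ker (averageMap (twist ρ χ)) = ⨆ s ∈ S, LinearMap.ker (ρ s - 1) := by
  refine le_antisymm (fun v hv => ?_)
    (iSup₂_le fun s hs v hv => averageMap_twist_eq_zero (hSχ s hs) hv)
  have := sub_averageMap_mem (twist ρ χ) (sub_twist_apply_mem_iSup_ker hS hSinv hSχ) v
  rwa [LinearMap.mem_ker.1 hv, sub_zero] at this

theorem isCompl_invariants_twist_iSup_ker (hS : Subgroup.closure S = ⊤)
    (hSinv : ∀ s ∈ S, s * s = 1) (hSχ : ∀ s ∈ S, χ s = -1) :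
    IsCompl (invariants (twist ρ χ)) (⨆ s ∈ S, LinearMap.ker (ρ s - 1)) := by
  rw [← ker_averageMap_twist hS hSinv hSχ]
  exact (isProj_averageMap _).isCompl

end Representation

theorem matAct_one {n : ℕ} : matAct (1 : Matrix (Fin n) (Fin n) ℚ) = AlgHom.id ℚ _ :=
  MvPolynomial.algHom_ext fun i => by simp [matAct, Matrix.one_apply]

theorem matAct_mul {n : ℕ} (A B : Matrix (Fin n) (Fin n) ℚ) :
    matAct (A * B) = (matAct A).comp (matAct B) := by
  refine MvPolynomial.algHom_ext fun i => ?_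
  simp only [matAct, AlgHom.comp_apply, aeval_X, Matrix.mul_apply, map_sum, map_mul, aeval_C,
    algebraMap_eq, Finset.sum_mul, Finset.mul_sum]
  rw [Finset.sum_comm]
  exact Finset.sum_congr rfl fun k _ => Finset.sum_congr rfl fun j _ => by ring

noncomputable def polyRep (n : ℕ) :
    Representation ℚ (GL (Fin n) ℚ) (MvPolynomial (Fin n) ℚ) where
  toFun g := (matAct (g : Matrix (Fin n) (Fin n) ℚ)).toLinearMap
  map_one' := by rw [Units.val_one, matAct_one]; rfl
  map_mul' g h := by rw [Units.val_mul, matAct_mul]; rfl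

theorem polyRep_apply {n : ℕ} (g : GL (Fin n) ℚ) (f : MvPolynomial (Fin n) ℚ) :
    polyRep n g f = matAct (g : Matrix (Fin n) (Fin n) ℚ) f := rfl

theorem polyInvariantsElem_eq_ker {n : ℕ} (g : GL (Fin n) ℚ) :
    polyInvariantsElem g = LinearMap.ker (polyRep n g - 1) := by
  ext f
  rw [LinearMap.mem_ker, LinearMap.sub_apply, sub_eq_zero]
  rfl

theorem polyRelInvariants_eq_invariants_twist {n : ℕ} (H : Subgroup (GL (Fin n) ℚ)) :
    polyRelInvariants H = Representation.invariants (Representation.twist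
      ((polyRep n).comp H.subtype) (GeneralLinearGroup.det.comp H.subtype)) := by
  ext f
  rw [Representation.mem_invariants_twist, Subtype.forall]
  simp only [MonoidHom.comp_apply, Subgroup.coe_subtype, polyRep_apply,
    GeneralLinearGroup.val_det_apply]
  rfl

theorem IsReflection.det_eq_neg_one {n : ℕ} (hn : n ≠ 0) {r : GL (Fin n) ℚ}
    (hr : IsReflection r) : GeneralLinearGroup.det r = -1 := by
  set f := toLin' (r : Matrix (Fin n) (Fin n) ℚ)
  have hsq : f * f = 1 := by
    rw [Module.End.mul_eq_comp, ← toLin'_mul, ← Units.val_mul, hr.1, Units.val_one, toLin'_one]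
    rfl
  have hfix : finrank ℚ (LinearMap.ker (f - 1)) = n - 1 := hr.2
  ext
  rw [GeneralLinearGroup.val_det_apply, ← LinearMap.det_toLin',
    LinearMap.det_eq_neg_one_pow_of_mul_self_eq_one hsq, hfix, Module.finrank_fin_fun,
    Nat.sub_sub_self (Nat.one_le_iff_ne_zero.2 hn), pow_one, Units.val_neg, Units.val_one]

/-- If `s ≠ t` are reflections in `GL_n(ℚ)` generating a finite subgroup
`R = ⟨s, t⟩`, then `ℚ[x_1, …, x_n]` is the internal direct sum of the relative invariants
`ℚ[x_1, …, x_n]^R_det` and the sum `ℚ[x_1, …, x_n]^s + ℚ[x_1, …, x_n]^t`: the two subspaces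
intersect trivially and their sum is everything. -/
theorem polynomial_direct_sum_relInvariants {n : ℕ} (s t : GL (Fin n) ℚ)
    (hs : IsReflection s) (ht : IsReflection t) (hst : s ≠ t)
    (hfin : ((Subgroup.closure {s, t} : Subgroup (GL (Fin n) ℚ)) : Set (GL (Fin n) ℚ)).Finite) :
    polyRelInvariants (Subgroup.closure {s, t}) ⊓
        (polyInvariantsElem s ⊔ polyInvariantsElem t) = ⊥ ∧
      polyRelInvariants (Subgroup.closure {s, t}) ⊔
        (polyInvariantsElem s ⊔ polyInvariantsElem t) = ⊤ := by
  have hn : n ≠ 0 := by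
    rintro rfl
    exact hst (Subsingleton.elim s t)
  set R := Subgroup.closure {s, t}
  have : Fintype R := hfin.fintype
  let s' : R := ⟨s, Subgroup.subset_closure (by simp)⟩
  let t' : R := ⟨t, Subgroup.subset_closure (by simp)⟩
  have hgen : Subgroup.closure {s', t'} = ⊤ := by
    convert Subgroup.closure_closure_coe_preimage (k := {s, t}) using 2
    ext ⟨g, _⟩
    simp [s', t', Subtype.ext_iff]
  have hinv : ∀ r ∈ ({s', t'} : Set R), r * r = 1 := by
    rintro _ (rfl | rfl)
    exacts [Subtype.ext hs.1, Subtype.ext ht.1]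
  have hdet : ∀ r ∈ ({s', t'} : Set R), GeneralLinearGroup.det (r : GL (Fin n) ℚ) = -1 := by
    rintro _ (rfl | rfl)
    exacts [hs.det_eq_neg_one hn, ht.det_eq_neg_one hn]
  have key := Representation.isCompl_invariants_twist_iSup_ker
    (ρ := (polyRep n).comp R.subtype) (χ := GeneralLinearGroup.det.comp R.subtype) hgen hinv hdet
  rw [iSup_pair, ← polyRelInvariants_eq_invariants_twist] at key
  rw [polyInvariantsElem_eq_ker, polyInvariantsElem_eq_ker]
  exact ⟨key.inf_eq_bot, key.sup_eq_top⟩
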